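/- For every splitting filtration 𝔖 of order N there exists a unique reduced splitting filtration 𝔖* of order N with the same branch set, B(𝔖*) = B(𝔖). Consequently, the reduced splitting filtrations form a complete set of representatives for the equivalence relation 𝔖 ≃ 𝔖′ ⟺ B(𝔖) = B(𝔖′) on S_N. -/

import Mathlib

open Finset MeasureTheory

noncomputable section

structure SplittingFiltration (N : ℕ) where
  L : ℕ
  π : ℕ → Finpartition (Finset.univ : Finset (Fin N))
  top_eq : (π 0).parts = {Finset.univ}
  strict : ∀ ℓ < L, π (ℓ + 1) < π ℓ
  bot_eq : ∀ ℓ, L ≤ ℓ → π ℓ = ⊥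

namespace SplittingFiltration

variable {N : ℕ} (S : SplittingFiltration N)

/-- The branch set: non-singleton blocks appearing in levels `0,…,L−1`. -/
def branches : Finset (Finset (Fin N)) :=
  ((Finset.range S.L).biUnion fun ℓ => (S.π ℓ).parts).filter fun b => 1 < b.card

/-- The branch depth: the largest level index `ℓ < L` whose partition contains `b`. -/
def depth (b : Finset (Fin N)) : ℕ := sSup {ℓ | ℓ < S.L ∧ b ∈ (S.π ℓ).parts}

/-- The branch degree: the number of blocks of the next level contained in `b`. -/
def deg (b : Finset (Fin N)) : ℕ := ((S.π (S.depth b + 1)).parts.filter fun c => c ⊆ b).card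

/-- The multiplicity `M_{𝔖,q}`, a product of falling factorials `(q−1)_{deg−1}`. -/
def mult (q : ℕ) : ℕ := ∏ b ∈ S.branches, (q - 1).descFactorial (S.deg b - 1)

/-- A splitting filtration is reduced if each branch lies in exactly one level. -/
def Reduced : Prop := ∀ b ∈ S.branches, ∃! ℓ, ℓ < S.L ∧ b ∈ (S.π ℓ).parts

end SplittingFiltration

/-- The rank of a partition of `[N]`: `N` minus the number of blocks. -/
def prank {N : ℕ} (P : Finpartition (Finset.univ : Finset (Fin N))) : ℕ :=
  N - P.parts.card

/-- The set of ordered pairs `(i,j)` with `i < j`. -/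
def pairFinset (N : ℕ) : Finset (Fin N × Fin N) := Finset.univ.filter fun p => p.1 < p.2

/-- `Σ_{i<j, i,j ∈ b} s i j`. -/
def pairSum {N : ℕ} (s : Fin N → Fin N → ℂ) (b : Finset (Fin N)) : ℂ :=
  ∑ p ∈ (pairFinset N).filter (fun p => p.1 ∈ b ∧ p.2 ∈ b), s p.1 p.2

/-- Branch exponent `e_b(s) = (#b − 1) + Σ_{i<j ∈ b} s_{ij}`. -/
def branchExp {N : ℕ} (s : Fin N → Fin N → ℂ) (b : Finset (Fin N)) : ℂ :=
  ((b.card : ℂ) - 1) + pairSum s b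

/-- Level exponent `E_{𝔖,ℓ}(s) = Σ_{b ∈ B(𝔖) ∩ π_ℓ} e_b(s)`. -/
def levelExp {N : ℕ} (S : SplittingFiltration N) (s : Fin N → Fin N → ℂ) (ℓ : ℕ) : ℂ :=
  ∑ b ∈ (S.π ℓ).parts.filter (fun b => 1 < b.card), branchExp s b

/-- `m_ℓ = −1 + n_0 + ⋯ + n_{ℓ−1}`. -/
def mval (n : ℕ → ℕ) (ℓ : ℕ) : ℤ := (∑ t ∈ Finset.range ℓ, (n t : ℤ)) - 1

/-- Two indices lie in a common block of the partition `P`. -/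
def SamePart {N : ℕ} (P : Finpartition (Finset.univ : Finset (Fin N))) (i j : Fin N) : Prop :=
  ∃ b ∈ P.parts, i ∈ b ∧ j ∈ b

/-- `x ∈ T(𝔖, n)`: the level pair associated to `x` is `(𝔖, n)`. -/
def InT {K : Type*} [NormedField K] (q : ℕ) {N : ℕ} (S : SplittingFiltration N)
    (n : ℕ → ℕ) (x : Fin N → K) : Prop :=
  (∀ i, ‖x i‖ ≤ 1) ∧
  (∀ ℓ < S.L, ∀ i j : Fin N,
    SamePart (S.π ℓ) i j ↔ ‖x i - x j‖ ≤ (q : ℝ) ^ (-(mval n (ℓ + 1)))) ∧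
  (∀ i j : Fin N, i ≠ j → ∃ ℓ < S.L, ‖x i - x j‖ = (q : ℝ) ^ (-(mval n (ℓ + 1)))) ∧
  (∀ ℓ < S.L, ∃ i j : Fin N, i ≠ j ∧ ‖x i - x j‖ = (q : ℝ) ^ (-(mval n (ℓ + 1))))

lemma pairFinset_nonempty {N : ℕ} (hN : 2 ≤ N) : (pairFinset N).Nonempty := by
  refine ⟨(⟨0, by omega⟩, ⟨1, by omega⟩), ?_⟩
  simp only [pairFinset, Finset.mem_filter, Finset.mem_univ, true_and]
  exact Fin.mk_lt_mk.mpr (by omega)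

/-- The diameter `max_{i<j} ‖x_i − x_j‖`. -/
def maxDist {K : Type*} [NormedField K] {N : ℕ} (hN : 2 ≤ N) (x : Fin N → K) : ℝ :=
  (pairFinset N).sup' (pairFinset_nonempty hN) fun p => ‖x p.1 - x p.2‖

/-- The minimum distance `min_{i<j} ‖x_i − x_j‖`. -/
def minDist {K : Type*} [NormedField K] {N : ℕ} (hN : 2 ≤ N) (x : Fin N → K) : ℝ :=
  (pairFinset N).inf' (pairFinset_nonempty hN) fun p => ‖x p.1 - x p.2‖

/-!
The branch set of a splitting filtration is a laminar family: two branches are nested or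
disjoint. Give each branch its nesting depth, the number of branches strictly containing it.
In a reduced filtration a branch sits exactly at the level equal to its depth, so the
non-singleton blocks of level `ℓ` are the branches of depth `ℓ`; as a partition is determined by
its non-singleton blocks, a reduced filtration is determined by its branch set. Conversely, for
`N ≥ 2` the branches of each depth `ℓ` are pairwise disjoint, and completing them by singletons
gives the levels of a reduced filtration with the same branch set. For `N ≤ 1` there are no
branches and every filtration is reduced.
-/

namespace Finpartition

variable {α : Type*} [DecidableEq α]

def nontrivialParts {s : Finset α} (P : Finpartition s) : Finset (Finset α) :=
  {p ∈ P.parts | 1 < #p}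

lemma part_subset_part_of_le {s : Finset α} {P Q : Finpartition s} (h : P ≤ Q) {a : α}
    (ha : a ∈ s) : P.part a ⊆ Q.part a := by
  obtain ⟨q, hq, hpq⟩ := h (P.part_mem.mpr ha)
  rwa [Q.part_eq_of_mem hq (hpq (P.mem_part ha))]

section Fintype

variable [Fintype α]

lemma card_le_one_iff_eq_singleton {P : Finpartition (univ : Finset α)} {p : Finset α}
    (hp : p ∈ P.parts) : #p ≤ 1 ↔ ∃ i, p = {i} := by
  refine ⟨fun h => ?_, by rintro ⟨i, rfl⟩; simp⟩
  exact card_eq_one.mp (le_antisymm h (card_pos.mpr (P.nonempty_of_mem_parts hp)))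

lemma singleton_mem_parts {P : Finpartition (univ : Finset α)} {i : α}
    (hi : P.part i ∉ P.nontrivialParts) : {i} ∈ P.parts := by
  have hmem : P.part i ∈ P.parts := P.part_mem.mpr (mem_univ i)
  obtain ⟨j, hj⟩ := (card_le_one_iff_eq_singleton hmem).mp
    (by simpa [nontrivialParts, hmem] using hi)
  have : i ∈ P.part i := P.mem_part (mem_univ i)
  rw [hj, mem_singleton] at this
  rwa [this, ← hj]

lemma ext_nontrivialParts {P Q : Finpartition (univ : Finset α)}
    (h : P.nontrivialParts = Q.nontrivialParts) : P = Q := by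
  suffices key : ∀ {P Q : Finpartition (univ : Finset α)},
      P.nontrivialParts = Q.nontrivialParts → P.parts ⊆ Q.parts from
    Finpartition.ext ((key h).antisymm (key h.symm))
  intro P Q h p hp
  by_cases hcard : 1 < #p
  · have : p ∈ Q.nontrivialParts := h ▸ mem_filter.mpr ⟨hp, hcard⟩
    exact (mem_filter.mp this).1
  obtain ⟨i, rfl⟩ := (card_le_one_iff_eq_singleton hp).mp (not_lt.mp hcard)
  refine singleton_mem_parts fun hQ => ?_
  rw [← h, nontrivialParts, mem_filter] at hQ
  have := P.eq_of_mem_parts hp hQ.1 (mem_singleton_self i) (Q.mem_part (mem_univ i))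
  exact hcard (this ▸ hQ.2)

lemma le_of_nontrivialParts {P Q : Finpartition (univ : Finset α)}
    (h : ∀ p ∈ P.nontrivialParts, ∃ q ∈ Q.parts, p ⊆ q) : P ≤ Q := by
  intro p hp
  by_cases hcard : 1 < #p
  · exact h p (mem_filter.mpr ⟨hp, hcard⟩)
  obtain ⟨i, rfl⟩ := (card_le_one_iff_eq_singleton hp).mp (not_lt.mp hcard)
  exact ⟨Q.part i, Q.part_mem.mpr (mem_univ i),
    singleton_subset_iff.mpr (Q.mem_part (mem_univ i))⟩

@[simp]
lemma nontrivialParts_bot : (⊥ : Finpartition (univ : Finset α)).nontrivialParts = ∅ :=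
  filter_eq_empty_iff.mpr fun p hp => by
    obtain ⟨i, -, rfl⟩ := mem_bot_iff.mp hp
    simp

lemma parts_eq_singleton_univ {P : Finpartition (univ : Finset α)} (h : univ ∈ P.parts) :
    P.parts = {univ} := by
  refine eq_singleton_iff_unique_mem.mpr ⟨h, fun p hp => ?_⟩
  obtain ⟨i, hi⟩ := P.nonempty_of_mem_parts hp
  exact P.eq_of_mem_parts hp h hi (mem_univ i)

variable (F : Finset (Finset α))

def ofNontrivialParts (hF : (F : Set (Finset α)).PairwiseDisjoint id) (hcard : ∀ b ∈ F, 1 < #b) :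
    Finpartition (univ : Finset α) :=
  ofExistsUnique (F ∪ ({i | ∀ b ∈ F, i ∉ b} : Finset α).image singleton)
    (fun _ _ => subset_univ _)
    (fun i _ => by
      have hF' : ∀ b ∈ F, ∀ c ∈ F, i ∈ b → i ∈ c → b = c :=
        fun b hb c hc => hF.elim_finset hb hc i
      by_cases hi : ∃ b ∈ F, i ∈ b
      · obtain ⟨b, hb, hib⟩ := hi
        refine ⟨b, ⟨mem_union_left _ hb, hib⟩, ?_⟩
        grind
      · refine ⟨{i}, by simp_all, ?_⟩
        grind)
    (by
      simp only [mem_union, mem_image, not_or, not_exists]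
      exact ⟨fun h => by simpa using hcard _ h, fun i h => singleton_ne_empty i h.2⟩)

@[simp]
lemma nontrivialParts_ofNontrivialParts (hF : (F : Set (Finset α)).PairwiseDisjoint id)
    (hcard : ∀ b ∈ F, 1 < #b) : (ofNontrivialParts F hF hcard).nontrivialParts = F := by
  ext p
  simp only [nontrivialParts, ofNontrivialParts, ofExistsUnique_parts, mem_filter, mem_union,
    mem_image]
  grind [card_singleton]

end Fintype

end Finpartition

section Laminar

variable {α : Type*} [DecidableEq α] {F : Finset (Finset α)} {b c : Finset α}

def IsLaminar (F : Finset (Finset α)) : Prop :=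
  ∀ b ∈ F, ∀ c ∈ F, ¬Disjoint b c → b ⊆ c ∨ c ⊆ b

def nestingDepth (F : Finset (Finset α)) (b : Finset α) : ℕ := #{c ∈ F | b ⊂ c}

lemma nestingDepth_lt_of_ssubset (hc : c ∈ F) (hbc : b ⊂ c) :
    nestingDepth F c < nestingDepth F b := by
  refine card_lt_card ((ssubset_iff_of_subset fun e he => ?_).mpr ⟨c, ?_, ?_⟩)
  · rw [mem_filter] at he ⊢
    exact ⟨he.1, hbc.trans he.2⟩
  · exact mem_filter.mpr ⟨hc, hbc⟩
  · simp

lemma IsLaminar.eq_of_nestingDepth_eq (hF : IsLaminar F) (hb : b ∈ F) (hc : c ∈ F)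
    (hbc : ¬Disjoint b c) (h : nestingDepth F b = nestingDepth F c) : b = c := by
  rcases hF b hb c hc hbc with hs | hs
  · by_contra hne
    exact (nestingDepth_lt_of_ssubset hc (hs.ssubset_of_ne hne)).ne h.symm
  · by_contra hne
    exact (nestingDepth_lt_of_ssubset hb (hs.ssubset_of_ne (Ne.symm hne))).ne h

lemma IsLaminar.pairwiseDisjoint_nestingDepth_eq (hF : IsLaminar F) (ℓ : ℕ) :
    (({b ∈ F | nestingDepth F b = ℓ} : Finset _) : Set (Finset α)).PairwiseDisjoint id := by
  intro b hb c hc hne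
  simp only [coe_filter, Set.mem_ofPred_eq] at hb hc
  by_contra hbc
  exact hne (hF.eq_of_nestingDepth_eq hb.1 hc.1 hbc (hb.2.trans hc.2.symm))

lemma IsLaminar.exists_parent (hF : IsLaminar F) (hb : b.Nonempty) {k : ℕ}
    (h : nestingDepth F b = k + 1) : ∃ c ∈ F, b ⊂ c ∧ nestingDepth F c = k := by
  -- The strict supersets of `b` form a chain; the one of largest depth is the smallest of them.
  set A := {c ∈ F | b ⊂ c}
  have hAcard : #A = k + 1 := h
  have hA : A.Nonempty := card_pos.mp (by omega)
  obtain ⟨c, hcA, hmax⟩ := A.exists_max_image (nestingDepth F) hA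
  obtain ⟨hc, hbc⟩ := mem_filter.mp hcA
  have hanc : {e ∈ F | c ⊂ e} = A.erase c := by
    ext e
    simp only [A, mem_erase, mem_filter]
    constructor
    · rintro ⟨he, hce⟩
      exact ⟨hce.ne', he, hbc.trans hce⟩
    · rintro ⟨hne, he, hbe⟩
      refine ⟨he, ?_⟩
      obtain ⟨i, hi⟩ := hb
      rcases hF c hc e he (not_disjoint_iff.mpr ⟨i, hbc.subset hi, hbe.subset hi⟩) with hs | hs
      · exact hs.ssubset_of_ne hne.symm
      · have := hmax e (mem_filter.mpr ⟨he, hbe⟩)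
        have := nestingDepth_lt_of_ssubset hc (hs.ssubset_of_ne hne)
        omega
  refine ⟨c, hc, hbc, ?_⟩
  rw [nestingDepth, hanc, card_erase_of_mem hcA, hAcard, Nat.add_sub_cancel]

lemma IsLaminar.exists_nestingDepth_eq (hF : IsLaminar F) (hb : b.Nonempty) (hbF : b ∈ F) {ℓ : ℕ}
    (h : ℓ ≤ nestingDepth F b) : ∃ c ∈ F, nestingDepth F c = ℓ := by
  obtain ⟨k, hk⟩ := Nat.exists_eq_add_of_le h
  induction k generalizing b with
  | zero => exact ⟨b, hbF, hk⟩
  | succ k ih =>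
    obtain ⟨c, hc, hbc, hck⟩ := hF.exists_parent hb (k := ℓ + k) (by omega)
    exact ih (hb.mono hbc.subset) hc (by omega) hck

end Laminar

section LevelPartition

variable {α : Type*} [DecidableEq α] [Fintype α] {F : Finset (Finset α)}

lemma nestingDepth_univ : nestingDepth F univ = 0 := by
  simpa [nestingDepth] using fun x _ h => h.not_subset (subset_univ x)

def levelPartition (hF : IsLaminar F) (hcard : ∀ b ∈ F, 1 < #b) (ℓ : ℕ) :
    Finpartition (univ : Finset α) :=
  .ofNontrivialParts {b ∈ F | nestingDepth F b = ℓ} (hF.pairwiseDisjoint_nestingDepth_eq ℓ)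
    fun b hb => hcard b (mem_filter.mp hb).1

variable (hF : IsLaminar F) (hcard : ∀ b ∈ F, 1 < #b)

@[simp]
lemma nontrivialParts_levelPartition (ℓ : ℕ) :
    (levelPartition hF hcard ℓ).nontrivialParts = {b ∈ F | nestingDepth F b = ℓ} :=
  Finpartition.nontrivialParts_ofNontrivialParts _ _ _

lemma mem_levelPartition_parts {b : Finset α} (hb : b ∈ F) :
    b ∈ (levelPartition hF hcard (nestingDepth F b)).parts := by
  have : b ∈ (levelPartition hF hcard (nestingDepth F b)).nontrivialParts := by simpa using hb
  exact (mem_filter.mp this).1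

lemma levelPartition_zero (huniv : univ ∈ F) : (levelPartition hF hcard 0).parts = {univ} :=
  Finpartition.parts_eq_singleton_univ
    (nestingDepth_univ (F := F) ▸ mem_levelPartition_parts hF hcard huniv)

lemma levelPartition_succ_le (ℓ : ℕ) :
    levelPartition hF hcard (ℓ + 1) ≤ levelPartition hF hcard ℓ := by
  refine Finpartition.le_of_nontrivialParts fun b hb => ?_
  rw [nontrivialParts_levelPartition, mem_filter] at hb
  obtain ⟨c, hc, hbc, hcℓ⟩ := hF.exists_parent (card_pos.mp (by linarith [hcard b hb.1])) hb.2
  exact ⟨c, hcℓ ▸ mem_levelPartition_parts hF hcard hc, hbc.subset⟩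

lemma levelPartition_succ_lt {ℓ : ℕ} (h : ∃ b ∈ F, nestingDepth F b = ℓ) :
    levelPartition hF hcard (ℓ + 1) < levelPartition hF hcard ℓ := by
  refine (levelPartition_succ_le hF hcard ℓ).lt_of_ne fun heq => ?_
  obtain ⟨b, hb, rfl⟩ := h
  have := congrArg Finpartition.nontrivialParts heq
  simp only [nontrivialParts_levelPartition] at this
  have hmem : b ∈ {c ∈ F | nestingDepth F c = nestingDepth F b + 1} :=
    this ▸ mem_filter.mpr ⟨hb, rfl⟩
  simp at hmem

lemma levelPartition_eq_bot {ℓ : ℕ} (h : F.sup (nestingDepth F) < ℓ) :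
    levelPartition hF hcard ℓ = ⊥ := by
  refine Finpartition.ext_nontrivialParts ?_
  rw [nontrivialParts_levelPartition, Finpartition.nontrivialParts_bot, filter_eq_empty_iff]
  exact fun b hb hbℓ => (le_sup (f := nestingDepth F) hb).not_gt (hbℓ ▸ h)

end LevelPartition

namespace SplittingFiltration

variable {N : ℕ} (S : SplittingFiltration N)

lemma lt_L_of_mem_nontrivialParts {ℓ : ℕ} {b : Finset (Fin N)}
    (hb : b ∈ (S.π ℓ).nontrivialParts) : ℓ < S.L := by
  by_contra h
  rw [S.bot_eq ℓ (not_lt.mp h), Finpartition.nontrivialParts_bot] at hb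
  exact notMem_empty b hb

lemma mem_branches_iff {b : Finset (Fin N)} :
    b ∈ S.branches ↔ ∃ ℓ, b ∈ (S.π ℓ).nontrivialParts := by
  simp only [branches, Finpartition.nontrivialParts, mem_filter, mem_biUnion, mem_range]
  constructor
  · rintro ⟨⟨ℓ, -, hb⟩, hcard⟩
    exact ⟨ℓ, hb, hcard⟩
  · rintro ⟨ℓ, hb, hcard⟩
    exact ⟨⟨ℓ, S.lt_L_of_mem_nontrivialParts (mem_filter.mpr ⟨hb, hcard⟩), hb⟩, hcard⟩

lemma one_lt_card_of_mem_branches {b : Finset (Fin N)} (hb : b ∈ S.branches) : 1 < #b :=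
  (mem_filter.mp hb).2

lemma branches_eq_empty (hN : N ≤ 1) : S.branches = ∅ :=
  eq_empty_of_forall_notMem fun b hb =>
    (S.one_lt_card_of_mem_branches hb).not_ge ((card_le_univ b).trans (by simpa using hN))

lemma univ_mem_branches (hN : 2 ≤ N) : univ ∈ S.branches :=
  S.mem_branches_iff.mpr
    ⟨0, mem_filter.mpr ⟨S.top_eq ▸ mem_singleton_self _, by simpa using Nat.lt_of_succ_le hN⟩⟩

lemma reduced_iff : S.Reduced ↔ ∀ b ℓ m, b ∈ (S.π ℓ).nontrivialParts →
    b ∈ (S.π m).nontrivialParts → ℓ = m := by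
  constructor
  · intro hS b ℓ m hℓ hm
    exact (hS b (S.mem_branches_iff.mpr ⟨ℓ, hℓ⟩)).unique
      ⟨S.lt_L_of_mem_nontrivialParts hℓ, (mem_filter.mp hℓ).1⟩
      ⟨S.lt_L_of_mem_nontrivialParts hm, (mem_filter.mp hm).1⟩
  · intro hS b hb
    obtain ⟨ℓ, hℓ⟩ := S.mem_branches_iff.mp hb
    exact ⟨ℓ, ⟨S.lt_L_of_mem_nontrivialParts hℓ, (mem_filter.mp hℓ).1⟩, fun m ⟨_, hm⟩ =>
      hS b m ℓ (mem_filter.mpr ⟨hm, S.one_lt_card_of_mem_branches hb⟩) hℓ⟩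

lemma pi_antitone : Antitone S.π := antitone_nat_of_succ_le fun ℓ => by
  rcases lt_or_ge ℓ S.L with h | h
  · exact (S.strict ℓ h).le
  · rw [S.bot_eq (ℓ + 1) (by omega)]
    exact bot_le

lemma part_subset_part {ℓ m : ℕ} (h : ℓ ≤ m) (i : Fin N) :
    (S.π m).part i ⊆ (S.π ℓ).part i :=
  Finpartition.part_subset_part_of_le (S.pi_antitone h) (mem_univ i)

lemma isLaminar_branches : IsLaminar S.branches := by
  intro b hb c hc hbc
  obtain ⟨ℓ, hℓ⟩ := S.mem_branches_iff.mp hb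
  obtain ⟨m, hm⟩ := S.mem_branches_iff.mp hc
  obtain ⟨i, hib, hic⟩ := not_disjoint_iff.mp hbc
  rw [← (S.π ℓ).part_eq_of_mem (mem_filter.mp hℓ).1 hib,
    ← (S.π m).part_eq_of_mem (mem_filter.mp hm).1 hic]
  rcases le_total ℓ m with h | h
  · exact Or.inr (S.part_subset_part h i)
  · exact Or.inl (S.part_subset_part h i)

lemma pi_ne_bot {ℓ : ℕ} (h : ℓ < S.L) : S.π ℓ ≠ ⊥ :=
  (bot_le.trans_lt (S.strict ℓ h)).ne'

lemma ext_of_pi_eq {S T : SplittingFiltration N} (h : S.π = T.π) : S = T := by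
  have hL : S.L = T.L := by
    by_contra hne
    rcases lt_or_gt_of_ne hne with hlt | hlt
    · exact T.pi_ne_bot hlt (h ▸ S.bot_eq _ le_rfl)
    · exact S.pi_ne_bot hlt (h ▸ T.bot_eq _ le_rfl)
  cases S
  cases T
  simp_all

variable {S T : SplittingFiltration N}

/-- The blocks containing `b` at the levels `ℓ < m` are distinct because `S` is reduced, and they
are exactly the branches strictly containing `b`. -/
lemma Reduced.nestingDepth_eq (hS : S.Reduced) {b : Finset (Fin N)} {m : ℕ}
    (hb : b ∈ (S.π m).nontrivialParts) : nestingDepth S.branches b = m := by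
  obtain ⟨hbm, hcard⟩ := mem_filter.mp hb
  obtain ⟨i, hib⟩ : b.Nonempty := card_pos.mp (by omega)
  set g : ℕ → Finset (Fin N) := fun ℓ => (S.π ℓ).part i
  have hgm : g m = b := (S.π m).part_eq_of_mem hbm hib
  have hsub : ∀ ℓ ≤ m, b ⊆ g ℓ := fun ℓ hℓ => hgm ▸ S.part_subset_part hℓ i
  have hg : ∀ ℓ ≤ m, g ℓ ∈ (S.π ℓ).nontrivialParts := fun ℓ hℓ =>
    mem_filter.mpr ⟨(S.π ℓ).part_mem.mpr (mem_univ i), hcard.trans_le (card_le_card (hsub ℓ hℓ))⟩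
  have hinj : Set.InjOn g (range (m + 1)) := fun ℓ hℓ ℓ' hℓ' h =>
    S.reduced_iff.mp hS _ ℓ ℓ' (hg ℓ (by simpa [Nat.lt_succ_iff] using hℓ))
      (h ▸ hg ℓ' (by simpa [Nat.lt_succ_iff] using hℓ'))
  have hanc : {c ∈ S.branches | b ⊂ c} = (range m).image g := by
    ext c
    simp only [mem_filter, mem_image, mem_range]
    constructor
    · rintro ⟨hc, hbc⟩
      obtain ⟨ℓ, hℓ⟩ := S.mem_branches_iff.mp hc
      have hcg : g ℓ = c := (S.π ℓ).part_eq_of_mem (mem_filter.mp hℓ).1 (hbc.subset hib)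
      refine ⟨ℓ, lt_of_not_ge fun hmℓ => hbc.not_subset ?_, hcg⟩
      exact hgm ▸ hcg ▸ S.part_subset_part hmℓ i
    · rintro ⟨ℓ, hℓ, rfl⟩
      refine ⟨S.mem_branches_iff.mpr ⟨ℓ, hg ℓ hℓ.le⟩, (hsub ℓ hℓ.le).ssubset_of_ne fun h => ?_⟩
      have := hinj (by simp) (by simp only [coe_range, Set.mem_Iio]; omega) (h ▸ hgm)
      omega
  rw [nestingDepth, hanc, card_image_of_injOn (hinj.mono (by simp)), card_range]

lemma Reduced.nontrivialParts_eq (hS : S.Reduced) (ℓ : ℕ) :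
    (S.π ℓ).nontrivialParts = {b ∈ S.branches | nestingDepth S.branches b = ℓ} := by
  ext b
  rw [mem_filter]
  constructor
  · intro hb
    exact ⟨S.mem_branches_iff.mpr ⟨ℓ, hb⟩, hS.nestingDepth_eq hb⟩
  · rintro ⟨hb, rfl⟩
    obtain ⟨m, hm⟩ := S.mem_branches_iff.mp hb
    rwa [hS.nestingDepth_eq hm]

theorem Reduced.eq_of_branches_eq (hS : S.Reduced) (hT : T.Reduced)
    (h : S.branches = T.branches) : S = T :=
  ext_of_pi_eq <| funext fun ℓ => Finpartition.ext_nontrivialParts <| by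
    rw [hS.nontrivialParts_eq, hT.nontrivialParts_eq, h]

def ofBranches (F : Finset (Finset (Fin N))) (hF : IsLaminar F) (hcard : ∀ b ∈ F, 1 < #b)
    (huniv : univ ∈ F) : SplittingFiltration N where
  L := F.sup (nestingDepth F) + 1
  π := levelPartition hF hcard
  top_eq := levelPartition_zero hF hcard huniv
  strict ℓ hℓ := levelPartition_succ_lt hF hcard <| by
    obtain ⟨b, hb, hbmax⟩ := exists_mem_eq_sup F ⟨univ, huniv⟩ (nestingDepth F)
    exact hF.exists_nestingDepth_eq (card_pos.mp (by linarith [hcard b hb])) hb (by omega)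
  bot_eq ℓ hℓ := levelPartition_eq_bot hF hcard (by omega)

variable {F : Finset (Finset (Fin N))} (hF : IsLaminar F) (hcard : ∀ b ∈ F, 1 < #b)
  (huniv : univ ∈ F)

lemma branches_ofBranches : (ofBranches F hF hcard huniv).branches = F := by
  ext b
  simp [mem_branches_iff, ofBranches]

lemma reduced_ofBranches : (ofBranches F hF hcard huniv).Reduced := by
  rw [reduced_iff]
  intro b ℓ m hℓ hm
  simp only [ofBranches, nontrivialParts_levelPartition, mem_filter] at hℓ hm
  exact hℓ.2.symm.trans hm.2

end SplittingFiltration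

theorem exists_unique_reduction_general (N : ℕ) (S : SplittingFiltration N) :
    ∃! T : SplittingFiltration N, T.Reduced ∧ T.branches = S.branches := by
  refine existsUnique_of_exists_of_unique ?_ fun T U hT hU =>
    hT.1.eq_of_branches_eq hU.1 (hT.2.trans hU.2.symm)
  rcases le_or_gt N 1 with hN | hN
  · refine ⟨S, fun b hb => ?_, rfl⟩
    simp [S.branches_eq_empty hN] at hb
  · exact ⟨_, SplittingFiltration.reduced_ofBranches S.isLaminar_branches
      (fun _ => S.one_lt_card_of_mem_branches) (S.univ_mem_branches hN),
      SplittingFiltration.branches_ofBranches ..⟩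

/-- every splitting filtration has a unique reduction: a unique reduced
splitting filtration with the same branch set. -/
theorem exists_unique_reduction (N : ℕ) (hN : 2 ≤ N) (S : SplittingFiltration N) :
    ∃! T : SplittingFiltration N, T.Reduced ∧ T.branches = S.branches :=
  exists_unique_reduction_general N S
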